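/- Let μ, ν be probability measures on ℝ with finite p-th moments (p ≥ 1), with cumulative distribution functions F_μ, F_ν and quantile (generalized inverse) functions F_μ^{-1}, F_ν^{-1}. Then W_p(μ,ν)^p = ∫₀¹ |F_μ^{-1}(u) − F_ν^{-1}(u)|^p du. -/

import Mathlib

open MeasureTheory

/-- Cumulative distribution function of a measure on ℝ. -/
noncomputable def cdfFun (μ : Measure ℝ) : ℝ → ℝ := fun x => (μ (Set.Iic x)).toReal

/-- Quantile function (generalized inverse of the cdf). -/
noncomputable def quantileFun (μ : Measure ℝ) : ℝ → ℝ :=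
  fun u => sInf {x : ℝ | u ≤ cdfFun μ x}

/-!
Write `D` for a monotone derivative of `t ↦ |t|^p`. Integrating `D(s) - D(s - y)` over `s`
between `0` and `x` gives `|x - y|^p = |x|^p + |y|^p - ∫ K((x, y), s) ds`, so by Fubini the cost
of a coupling `γ` of `μ` and `ν` is a quantity depending only on the marginals minus
`∫ (∫ K(·, s) dγ) ds`. For fixed `s`, `∫ K(·, s) dγ` is, up to a term depending only on `ν`,
`∫_{x > s} b(y) dγ` with `b` monotone, and for such integrals the rearrangement bound
`∫_A b(Y) ≤ ∫_{1 - P(A)}^1 b(F_ν⁻¹(u)) du` holds, with equality for the comonotone coupling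
`(F_μ⁻¹(U), F_ν⁻¹(U))`, `U` uniform on `(0, 1)`. Hence this coupling is optimal, and its cost is
`∫_0^1 |F_μ⁻¹ - F_ν⁻¹|^p`.
-/

open ProbabilityTheory Set

section Quantile

variable {μ : Measure ℝ} [IsProbabilityMeasure μ] {u x : ℝ}

lemma cdfFun_eq_cdf : cdfFun μ = cdf μ := by
  ext x
  rw [cdfFun, cdf_eq_real, measureReal_def]

lemma quantileFun_le_iff (hu : u ∈ Ioo 0 1) : quantileFun μ u ≤ x ↔ u ≤ cdf μ x := by
  set S := {x | u ≤ cdf μ x}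
  have hS : quantileFun μ u = sInf S := by rw [quantileFun, cdfFun_eq_cdf]
  have hne : S.Nonempty := ((tendsto_cdf_atTop μ).eventually_const_le hu.2).exists
  have hbdd : BddBelow S := by
    obtain ⟨y, hy⟩ := ((tendsto_cdf_atBot μ).eventually_lt_const hu.1).exists
    exact ⟨y, fun z hz => le_of_lt ((monotone_cdf μ).reflect_lt (hy.trans_le hz))⟩
  -- right-continuity of the cdf puts `sInf S` itself in `S`
  have hmem : sInf S ∈ S := by
    refine ge_of_tendsto ((cdf μ).right_continuous _ |>.mono Ioi_subset_Ici_self) ?_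
    filter_upwards [self_mem_nhdsWithin] with z hz
    obtain ⟨w, hw, hwz⟩ := exists_lt_of_csInf_lt hne hz
    exact hw.trans (monotone_cdf μ hwz.le)
  rw [hS]
  exact ⟨fun h => hmem.trans (monotone_cdf μ h), fun h => csInf_le hbdd h⟩

lemma lt_quantileFun_iff (hu : u ∈ Ioo 0 1) : x < quantileFun μ u ↔ cdf μ x < u := by
  rw [← not_le, ← not_le, quantileFun_le_iff hu]

lemma monotoneOn_quantileFun : MonotoneOn (quantileFun μ) (Ioo 0 1) := fun _ hu _ hv huv =>
  (quantileFun_le_iff hu).2 (huv.trans ((quantileFun_le_iff hv).1 le_rfl))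

instance : IsProbabilityMeasure (volume.restrict (Ioo (0 : ℝ) 1)) :=
  ⟨by simp⟩

lemma volume_Ioo_inter_Iic {c : ℝ} (hc : c ≤ 1) :
    volume (Ioo 0 1 ∩ Iic c) = ENNReal.ofReal c := by
  refine le_antisymm ?_ ?_
  · calc volume (Ioo 0 1 ∩ Iic c) ≤ volume (Icc 0 c) :=
          measure_mono fun u hu => ⟨hu.1.1.le, hu.2⟩
      _ = ENNReal.ofReal c := by simp
  · calc ENNReal.ofReal c = volume (Ioo 0 c) := by simp
      _ ≤ volume (Ioo 0 1 ∩ Iic c) :=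
          measure_mono fun u hu => ⟨⟨hu.1, hu.2.trans_le hc⟩, hu.2.le⟩

theorem hasLaw_quantileFun : HasLaw (quantileFun μ) μ (volume.restrict (Ioo 0 1)) where
  aemeasurable := aemeasurable_restrict_of_monotoneOn measurableSet_Ioo monotoneOn_quantileFun
  map_eq := by
    refine Measure.ext_of_Iic _ _ fun x => ?_
    have hpre : quantileFun μ ⁻¹' Iic x ∩ Ioo 0 1 = Ioo 0 1 ∩ Iic (cdf μ x) := by
      ext u
      simp only [mem_inter_iff, mem_preimage, mem_Iic]
      exact ⟨fun h => ⟨h.2, (quantileFun_le_iff h.2).1 h.1⟩,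
        fun h => ⟨(quantileFun_le_iff h.1).2 h.2, h.1⟩⟩
    rw [Measure.map_apply_of_aemeasurable
        (aemeasurable_restrict_of_monotoneOn measurableSet_Ioo monotoneOn_quantileFun)
        measurableSet_Iic,
      Measure.restrict_apply' measurableSet_Ioo, hpre, volume_Ioo_inter_Iic (cdf_le_one μ x),
      ofReal_cdf]

lemma measureReal_Ioi_eq_one_sub_cdf (x : ℝ) : μ.real (Ioi x) = 1 - cdf μ x := by
  rw [← compl_Iic, probReal_compl_eq_one_sub measurableSet_Iic, cdf_eq_real]

end Quantile

section Rearrangement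

variable {Ω : Type*} [MeasurableSpace Ω] {P : Measure Ω}
  {ν : Measure ℝ} [IsProbabilityMeasure ν] {Y : Ω → ℝ} {b : ℝ → ℝ}

lemma integral_comp_eq_integral_quantileFun (hY : HasLaw Y ν P)
    (hb : AEStronglyMeasurable b ν) :
    ∫ ω, b (Y ω) ∂P = ∫ u in Ioo 0 1, b (quantileFun ν u) :=
  (hY.integral_comp hb).trans (hasLaw_quantileFun.integral_comp hb).symm

lemma setIntegral_max_comp_quantileFun_sub (hb : Monotone b) {t : ℝ} (ht : t ∈ Ioo 0 1) :
    ∫ u in Ioo 0 1, max (b (quantileFun ν u) - b (quantileFun ν t)) 0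
      = ∫ u in Ioo t 1, (b (quantileFun ν u) - b (quantileFun ν t)) := by
  have hpos : EqOn (fun u => max (b (quantileFun ν u) - b (quantileFun ν t)) 0)
      ((Ioo t 1).indicator fun u => b (quantileFun ν u) - b (quantileFun ν t)) (Ioo 0 1) := by
    intro u hu
    dsimp only
    rcases le_or_gt u t with hut | hut
    · rw [indicator_of_notMem (fun h => (h.1.trans_le hut).false), max_eq_right]
      exact sub_nonpos.2 (hb (monotoneOn_quantileFun hu ht hut))
    · rw [indicator_of_mem (mem_Ioo.2 ⟨hut, hu.2⟩), max_eq_left]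
      exact sub_nonneg.2 (hb (monotoneOn_quantileFun ht hu hut.le))
  rw [setIntegral_congr_fun measurableSet_Ioo hpos, setIntegral_indicator measurableSet_Ioo,
    Ioo_inter_Ioo, max_eq_right ht.1.le, min_self]

/-- Only the positive part of `b(Y) - β` can contribute on `A`; for `β = b(F_ν⁻¹(1 - P(A)))`
that positive part is carried by the upper `P(A)`-tail of `b ∘ F_ν⁻¹`. -/
theorem setIntegral_comp_le_integral_quantileFun (hY : HasLaw Y ν P) (hb : Monotone b)
    (hbi : Integrable b ν) {A : Set Ω} (hA : MeasurableSet A) :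
    ∫ ω in A, b (Y ω) ∂P ≤ ∫ u in Ioo (1 - P.real A) 1, b (quantileFun ν u) := by
  have := hY.isProbabilityMeasure
  set t := 1 - P.real A
  have hbY : Integrable (fun ω => b (Y ω)) P :=
    (hY.map_eq ▸ hbi).comp_aemeasurable hY.aemeasurable
  have hbQ : IntegrableOn (fun u => b (quantileFun ν u)) (Ioo 0 1) :=
    (hasLaw_quantileFun (μ := ν)).map_eq ▸ hbi |>.comp_aemeasurable
      hasLaw_quantileFun.aemeasurable
  rcases (measureReal_nonneg : 0 ≤ P.real A).eq_or_lt with hA0 | hA0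
  · rw [setIntegral_measure_zero _ ((measureReal_eq_zero_iff).1 hA0.symm)]
    simp [t, ← hA0]
  rcases (measureReal_le_one : P.real A ≤ 1).eq_or_lt with hA1 | hA1
  · have hAae : ∀ᵐ ω ∂P, ω ∈ A := (ae_mem_iff_measure_eq hA.nullMeasurableSet).2 <| by
      rw [measure_univ, ← ENNReal.toReal_eq_one_iff, ← measureReal_def, hA1]
    rw [Measure.restrict_eq_self_of_ae_mem hAae,
      integral_comp_eq_integral_quantileFun hY hbi.aestronglyMeasurable]
    simp [t, hA1]
  have ht : t ∈ Ioo (0 : ℝ) 1 := mem_Ioo.2 ⟨by simp [t, hA1], by simp [t, hA0]⟩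
  set β := b (quantileFun ν t)
  have hg := hbY.sub (integrable_const β)
  calc ∫ ω in A, b (Y ω) ∂P
      = (∫ ω in A, (b (Y ω) - β) ∂P) + P.real A * β := by
        rw [integral_sub hbY.integrableOn (integrable_const β), setIntegral_const, smul_eq_mul]
        ring
    _ ≤ (∫ ω in A, max (b (Y ω) - β) 0 ∂P) + P.real A * β := add_le_add_left
        (setIntegral_mono hg.integrableOn hg.pos_part.integrableOn fun _ => le_max_left _ _) _
    _ ≤ (∫ ω, max (b (Y ω) - β) 0 ∂P) + P.real A * β := add_le_add_left
        (setIntegral_le_integral hg.pos_part (ae_of_all _ fun _ => le_max_right _ _)) _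
    _ = (∫ u in Ioo 0 1, max (b (quantileFun ν u) - β) 0) + P.real A * β := by
        rw [integral_comp_eq_integral_quantileFun hY (b := fun y => max (b y - β) 0)
          ((hb.measurable.sub_const β).max measurable_const).aestronglyMeasurable]
    _ = (∫ u in Ioo t 1, (b (quantileFun ν u) - β)) + (1 - t) * β := by
        rw [setIntegral_max_comp_quantileFun_sub hb ht]
        congr 1
        simp [t]
    _ = ∫ u in Ioo t 1, b (quantileFun ν u) := by
        rw [integral_sub (hbQ.mono_set (Ioo_subset_Ioo_left ht.1.le)) (integrable_const β),
          setIntegral_const, smul_eq_mul, Real.volume_real_Ioo_of_le ht.2.le]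
        ring

end Rearrangement

section Moments

variable {α : Type*} [MeasurableSpace α] {μ : Measure α} {p : ℝ}

lemma integrable_abs_rpow_iff_memLp (hp : 0 < p) {f : α → ℝ} (hf : AEStronglyMeasurable f μ) :
    Integrable (fun a => |f a| ^ p) μ ↔ MemLp f (ENNReal.ofReal p) μ := by
  have h := integrable_norm_rpow_iff hf (by simpa using hp) ENNReal.ofReal_ne_top
  simpa only [ENNReal.toReal_ofReal hp.le, Real.norm_eq_abs] using h

lemma MeasureTheory.MemLp.integrable_abs_rpow (hp : 0 < p) {f : α → ℝ}
    (hf : MemLp f (ENNReal.ofReal p) μ) : Integrable (fun a => |f a| ^ p) μ :=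
  (integrable_abs_rpow_iff_memLp hp hf.1).2 hf

lemma ProbabilityTheory.HasLaw.memLp_of_integrable_abs_rpow {X : α → ℝ} {ν : Measure ℝ}
    (hp : 0 < p) (hX : HasLaw X ν μ) (hν : Integrable (fun x => |x| ^ p) ν) :
    MemLp X (ENNReal.ofReal p) μ :=
  (integrable_abs_rpow_iff_memLp hp hX.aemeasurable.aestronglyMeasurable).1
    ((hX.map_eq ▸ hν).comp_aemeasurable hX.aemeasurable)

end Moments

section AbsRpowDeriv

/-- At `0` this is the right derivative of `t ↦ |t| ^ p`, which matters for `p = 1`. -/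
noncomputable def absRpowDeriv (p t : ℝ) : ℝ :=
  if t < 0 then -(p * (-t) ^ (p - 1)) else p * t ^ (p - 1)

variable {p : ℝ} (hp : 1 ≤ p)
include hp

lemma monotone_absRpowDeriv : Monotone (absRpowDeriv p) := by
  intro a b hab
  unfold absRpowDeriv
  split_ifs with ha hb hb
  · exact neg_le_neg (mul_le_mul_of_nonneg_left
      (Real.rpow_le_rpow (by linarith) (by linarith) (by linarith)) (by linarith))
  · exact (neg_nonpos.2 (mul_nonneg (by linarith) (Real.rpow_nonneg (by linarith) _))).trans
      (mul_nonneg (by linarith) (Real.rpow_nonneg (not_lt.1 hb) _))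
  · exact absurd (hab.trans_lt hb) ha
  · exact mul_le_mul_of_nonneg_left
      (Real.rpow_le_rpow (not_lt.1 ha) hab (by linarith)) (by linarith)

lemma abs_absRpowDeriv (t : ℝ) : |absRpowDeriv p t| = p * |t| ^ (p - 1) := by
  unfold absRpowDeriv
  split_ifs with ht
  · rw [abs_neg, abs_of_neg ht,
      abs_of_nonneg (mul_nonneg (by linarith) (Real.rpow_nonneg (by linarith) _))]
  · rw [abs_of_nonneg (not_lt.1 ht),
      abs_of_nonneg (mul_nonneg (by linarith) (Real.rpow_nonneg (not_lt.1 ht) _))]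

lemma integral_absRpowDeriv_of_nonneg {b : ℝ} (hb : 0 ≤ b) :
    ∫ t in 0..b, absRpowDeriv p t = b ^ p := by
  have hcongr : EqOn (absRpowDeriv p) (fun t => p * t ^ (p - 1)) (uIcc 0 b) := by
    intro t ht
    rw [uIcc_of_le hb] at ht
    rw [absRpowDeriv, if_neg (not_lt.2 ht.1)]
  rw [intervalIntegral.integral_congr hcongr, intervalIntegral.integral_const_mul,
    integral_rpow (Or.inl (by linarith)), sub_add_cancel,
    Real.zero_rpow (by linarith), sub_zero, mul_div_cancel₀ _ (by linarith)]

lemma integral_absRpowDeriv (b : ℝ) : ∫ t in 0..b, absRpowDeriv p t = |b| ^ p := by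
  rcases le_or_gt 0 b with hb | hb
  · rw [integral_absRpowDeriv_of_nonneg hp hb, abs_of_nonneg hb]
  have hodd : ∀ t ∈ uIoc 0 (-b), absRpowDeriv p (-t) = -absRpowDeriv p t := by
    intro t ht
    rw [uIoc_of_le (by linarith)] at ht
    rw [absRpowDeriv, absRpowDeriv, if_pos (neg_lt_zero.2 ht.1), if_neg (not_lt.2 ht.1.le),
      neg_neg]
  have hneg : ∫ t in 0..-b, absRpowDeriv p (-t) = ∫ t in b..0, absRpowDeriv p t := by
    simp [intervalIntegral.integral_comp_neg]
  rw [intervalIntegral.integral_symm, ← hneg, intervalIntegral.integral_congr_ae (ae_of_all _ hodd),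
    intervalIntegral.integral_neg, neg_neg, integral_absRpowDeriv_of_nonneg hp (by linarith),
    abs_of_neg hb]

lemma integral_absRpowDeriv_sub (x y : ℝ) :
    ∫ s in 0..x, (absRpowDeriv p s - absRpowDeriv p (s - y))
      = |x| ^ p + |y| ^ p - |x - y| ^ p := by
  have hint : ∀ a b, IntervalIntegrable (absRpowDeriv p) volume a b :=
    fun _ _ => (monotone_absRpowDeriv hp).intervalIntegrable
  have hint' : IntervalIntegrable (fun s => absRpowDeriv p (s - y)) volume 0 x :=
    (monotone_absRpowDeriv hp |>.comp fun _ _ h => sub_le_sub_right h y).intervalIntegrable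
  have hshift : ∫ s in 0..x, absRpowDeriv p (s - y) = -|y| ^ p + |x - y| ^ p := by
    rw [intervalIntegral.integral_comp_sub_right (absRpowDeriv p) y,
      ← intervalIntegral.integral_add_adjacent_intervals (hint (0 - y) 0) (hint 0 (x - y)),
      intervalIntegral.integral_symm, integral_absRpowDeriv hp, integral_absRpowDeriv hp,
      zero_sub, abs_neg]
  rw [intervalIntegral.integral_sub (hint 0 x) hint', hshift, integral_absRpowDeriv hp]
  ring

lemma integrableOn_Ico_absRpowDeriv_sub (y a b : ℝ) :
    IntegrableOn (fun s => absRpowDeriv p s - absRpowDeriv p (s - y)) (Ico a b) :=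
  (((monotone_absRpowDeriv hp).locallyIntegrable.sub
    (monotone_absRpowDeriv hp |>.comp fun _ _ h => sub_le_sub_right h y).locallyIntegrable)
    |>.integrableOn_isCompact isCompact_Icc).mono_set Ico_subset_Icc_self

lemma integrable_absRpowDeriv_comp {α : Type*} [MeasurableSpace α] {μ : Measure α}
    [IsFiniteMeasure μ] {f : α → ℝ} (hf : MemLp f (ENNReal.ofReal p) μ) :
    Integrable (fun a => absRpowDeriv p (f a)) μ := by
  have hfp : Integrable (fun a => ‖f a‖ ^ p) μ := by
    simpa [ENNReal.toReal_ofReal (by linarith : 0 ≤ p)] using hf.integrable_norm_rpow'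
  have hmeas : AEStronglyMeasurable (fun a => absRpowDeriv p (f a)) μ :=
    ((monotone_absRpowDeriv hp).measurable.comp_aemeasurable hf.1.aemeasurable).aestronglyMeasurable
  refine (((integrable_norm_rpow_of_le hf.1 (by linarith) (by linarith) (by linarith : p - 1 ≤ p)
    hfp).const_mul p).mono' hmeas (ae_of_all _ fun a => ?_))
  rw [Real.norm_eq_abs, abs_absRpowDeriv hp, Real.norm_eq_abs]

end AbsRpowDeriv

section CostKernel

/-- The factor in front is `1_{[0, x)} - 1_{[x, 0)}` at `s`, written so that for fixed `s` it
depends on `x` only through the event `{s < x}`. -/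
noncomputable def costKernel (p : ℝ) (q : ℝ × ℝ) (s : ℝ) : ℝ :=
  ((if s < q.1 then 1 else 0) - (if s < 0 then 1 else 0)) *
    (absRpowDeriv p s - absRpowDeriv p (s - q.2))

variable {p : ℝ}

lemma costKernel_eq_indicator (q : ℝ × ℝ) :
    costKernel p q = (Ico 0 q.1).indicator (fun s => absRpowDeriv p s - absRpowDeriv p (s - q.2))
      - (Ico q.1 0).indicator (fun s => absRpowDeriv p s - absRpowDeriv p (s - q.2)) := by
  ext s
  simp only [costKernel, Pi.sub_apply, indicator_apply, mem_Ico]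
  split_ifs <;> grind

variable (hp : 1 ≤ p)
include hp

lemma integrable_costKernel (q : ℝ × ℝ) : Integrable (costKernel p q) := by
  rw [costKernel_eq_indicator]
  exact ((integrableOn_Ico_absRpowDeriv_sub hp _ _ _).integrable_indicator measurableSet_Ico).sub
    ((integrableOn_Ico_absRpowDeriv_sub hp _ _ _).integrable_indicator measurableSet_Ico)

lemma integral_costKernel (q : ℝ × ℝ) :
    ∫ s, costKernel p q s = |q.1| ^ p + |q.2| ^ p - |q.1 - q.2| ^ p := by
  rw [costKernel_eq_indicator, Pi.sub_def, integral_sub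
    ((integrableOn_Ico_absRpowDeriv_sub hp _ _ _).integrable_indicator measurableSet_Ico)
    ((integrableOn_Ico_absRpowDeriv_sub hp _ _ _).integrable_indicator measurableSet_Ico),
    integral_indicator measurableSet_Ico, integral_indicator measurableSet_Ico,
    ← integral_absRpowDeriv_sub hp]
  rcases le_or_gt 0 q.1 with hx | hx
  · rw [Ico_eq_empty (not_lt.2 hx), setIntegral_empty, sub_zero,
      intervalIntegral.integral_of_le hx, integral_Ico_eq_integral_Ioc]
  · rw [Ico_eq_empty (not_lt.2 hx.le), setIntegral_empty, zero_sub,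
      intervalIntegral.integral_of_ge hx.le, integral_Ico_eq_integral_Ioc]

lemma costKernel_nonneg_or_nonpos (q : ℝ × ℝ) :
    (∀ s, 0 ≤ costKernel p q s) ∨ ∀ s, costKernel p q s ≤ 0 := by
  have hD := monotone_absRpowDeriv hp
  have hA : ∀ s, 0 ≤ q.1 → 0 ≤ (if s < q.1 then 1 else 0) - (if s < 0 then (1 : ℝ) else 0) := by
    intro s hx; split_ifs <;> grind
  have hA' : ∀ s, q.1 < 0 → (if s < q.1 then 1 else 0) - (if s < 0 then (1 : ℝ) else 0) ≤ 0 := by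
    intro s hx; split_ifs <;> grind
  have hB : ∀ s, 0 ≤ q.2 → 0 ≤ absRpowDeriv p s - absRpowDeriv p (s - q.2) :=
    fun s hy => sub_nonneg.2 (hD (by linarith))
  have hB' : ∀ s, q.2 < 0 → absRpowDeriv p s - absRpowDeriv p (s - q.2) ≤ 0 :=
    fun s hy => sub_nonpos.2 (hD (by linarith))
  rcases le_or_gt 0 q.1 with hx | hx <;> rcases le_or_gt 0 q.2 with hy | hy
  · exact Or.inl fun s => mul_nonneg (hA s hx) (hB s hy)
  · exact Or.inr fun s => mul_nonpos_of_nonneg_of_nonpos (hA s hx) (hB' s hy)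
  · exact Or.inr fun s => mul_nonpos_of_nonpos_of_nonneg (hA' s hx) (hB s hy)
  · exact Or.inl fun s => mul_nonneg_of_nonpos_of_nonpos (hA' s hx) (hB' s hy)

lemma integral_abs_costKernel (q : ℝ × ℝ) :
    ∫ s, |costKernel p q s| = |∫ s, costKernel p q s| := by
  rcases costKernel_nonneg_or_nonpos hp q with h | h
  · rw [abs_of_nonneg (integral_nonneg h)]
    exact integral_congr_ae (ae_of_all _ fun s => abs_of_nonneg (h s))
  · rw [abs_of_nonpos (integral_nonpos h), ← integral_neg]
    exact integral_congr_ae (ae_of_all _ fun s => abs_of_nonpos (h s))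

lemma measurable_costKernel : Measurable (Function.uncurry (costKernel p)) := by
  have hD := (monotone_absRpowDeriv hp).measurable
  refine Measurable.mul ?_ ((hD.comp measurable_snd).sub
    (hD.comp (measurable_snd.sub (measurable_snd.comp measurable_fst))))
  exact (Measurable.ite (measurableSet_lt measurable_snd (measurable_fst.comp measurable_fst))
    measurable_const measurable_const).sub
    (Measurable.ite (measurableSet_lt measurable_snd measurable_const) measurable_const
      measurable_const)

lemma integral_costKernel_eq_setIntegral {γ : Measure (ℝ × ℝ)} [IsFiniteMeasure γ]
    (hy : MemLp (fun q => q.2) (ENNReal.ofReal p) γ) (s : ℝ) :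
    ∫ q, costKernel p q s ∂γ
      = ∫ q in {q | s < q.1}, (absRpowDeriv p s - absRpowDeriv p (s - q.2)) ∂γ
        - (if s < 0 then 1 else 0) * ∫ q, (absRpowDeriv p s - absRpowDeriv p (s - q.2)) ∂γ := by
  have hb : Integrable (fun q => absRpowDeriv p s - absRpowDeriv p (s - q.2)) γ :=
    (integrable_const _).sub (integrable_absRpowDeriv_comp hp ((memLp_const s).sub hy))
  rw [← integral_const_mul, ← integral_indicator (measurableSet_lt measurable_const measurable_fst),
    ← integral_sub (hb.indicator (measurableSet_lt measurable_const measurable_fst))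
      (hb.const_mul _)]
  refine integral_congr_ae (ae_of_all _ fun q => ?_)
  simp only [costKernel, indicator_apply, mem_ofPred_eq]
  split_ifs <;> ring

variable {γ : Measure (ℝ × ℝ)} (hx : MemLp (fun q => q.1) (ENNReal.ofReal p) γ)
  (hy : MemLp (fun q => q.2) (ENNReal.ofReal p) γ)
include hx hy

lemma integrable_uncurry_costKernel :
    Integrable (Function.uncurry (costKernel p)) (γ.prod volume) := by
  have hp0 : 0 < p := by linarith
  refine (integrable_prod_iff (measurable_costKernel hp).aestronglyMeasurable).2
    ⟨ae_of_all _ (integrable_costKernel hp), ?_⟩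
  simp_rw [Function.uncurry_apply_pair, Real.norm_eq_abs, integral_abs_costKernel hp,
    integral_costKernel hp]
  exact (((hx.integrable_abs_rpow hp0).add (hy.integrable_abs_rpow hp0)).sub
    ((hx.sub hy).integrable_abs_rpow hp0)).abs

lemma integral_abs_sub_rpow_eq [SFinite γ] :
    ∫ q, |q.1 - q.2| ^ p ∂γ
      = ∫ q, |q.1| ^ p ∂γ + ∫ q, |q.2| ^ p ∂γ - ∫ s, ∫ q, costKernel p q s ∂γ := by
  have hK := integrable_uncurry_costKernel hp hx hy
  have hKq : Integrable (fun q => ∫ s, costKernel p q s) γ := hK.integral_prod_left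
  have hxp := hx.integrable_abs_rpow (by linarith)
  have hyp := hy.integrable_abs_rpow (by linarith)
  have hsum : Integrable (fun q => |q.1| ^ p + |q.2| ^ p) γ := hxp.add hyp
  calc ∫ q, |q.1 - q.2| ^ p ∂γ = ∫ q, (|q.1| ^ p + |q.2| ^ p - ∫ s, costKernel p q s) ∂γ := by
        simp only [integral_costKernel hp, sub_sub_cancel]
    _ = _ := by rw [integral_sub hsum hKq, integral_add hxp hyp, integral_integral_swap hK]

end CostKernel

section QuantileCoupling

variable {μ ν : Measure ℝ} [IsProbabilityMeasure μ] [IsProbabilityMeasure ν]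

noncomputable def quantileCoupling (μ ν : Measure ℝ) : Measure (ℝ × ℝ) :=
  (volume.restrict (Ioo 0 1)).map fun u => (quantileFun μ u, quantileFun ν u)

lemma aemeasurable_quantileFun_prod :
    AEMeasurable (fun u => (quantileFun μ u, quantileFun ν u)) (volume.restrict (Ioo 0 1)) :=
  hasLaw_quantileFun.aemeasurable.prodMk hasLaw_quantileFun.aemeasurable

instance : IsProbabilityMeasure (quantileCoupling μ ν) :=
  Measure.isProbabilityMeasure_map aemeasurable_quantileFun_prod

lemma hasLaw_fst_quantileCoupling : HasLaw Prod.fst μ (quantileCoupling μ ν) where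
  aemeasurable := measurable_fst.aemeasurable
  map_eq := by
    rw [quantileCoupling, AEMeasurable.map_map_of_aemeasurable measurable_fst.aemeasurable
      aemeasurable_quantileFun_prod]
    exact hasLaw_quantileFun.map_eq

lemma hasLaw_snd_quantileCoupling : HasLaw Prod.snd ν (quantileCoupling μ ν) where
  aemeasurable := measurable_snd.aemeasurable
  map_eq := by
    rw [quantileCoupling, AEMeasurable.map_map_of_aemeasurable measurable_snd.aemeasurable
      aemeasurable_quantileFun_prod]
    exact hasLaw_quantileFun.map_eq

lemma setIntegral_fst_gt_quantileCoupling (s : ℝ) {b : ℝ → ℝ} (hb : Measurable b) :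
    ∫ q in {q | s < q.1}, b q.2 ∂(quantileCoupling μ ν)
      = ∫ u in Ioo (cdf μ s) 1, b (quantileFun ν u) := by
  have hpre : (fun u => (quantileFun μ u, quantileFun ν u)) ⁻¹' {q | s < q.1} ∩ Ioo 0 1
      = Ioo (cdf μ s) 1 := by
    ext u
    simp only [mem_inter_iff, mem_preimage, mem_ofPred_eq, mem_Ioo]
    refine ⟨fun h => ⟨(lt_quantileFun_iff h.2).1 h.1, h.2.2⟩, fun h => ?_⟩
    have hu : u ∈ Ioo 0 1 := ⟨(cdf_nonneg μ s).trans_lt h.1, h.2⟩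
    exact ⟨(lt_quantileFun_iff hu).2 h.1, hu⟩
  rw [quantileCoupling, setIntegral_map (measurableSet_lt measurable_const measurable_fst)
    (f := fun q => b q.2) (hb.comp measurable_snd).aestronglyMeasurable
    aemeasurable_quantileFun_prod, Measure.restrict_restrict' measurableSet_Ioo, hpre]

lemma integral_abs_sub_rpow_quantileCoupling {p : ℝ} (hp : 0 ≤ p) :
    ∫ q, |q.1 - q.2| ^ p ∂(quantileCoupling μ ν)
      = ∫ u in (0 : ℝ)..1, |quantileFun μ u - quantileFun ν u| ^ p := by
  have hcont : Continuous fun q : ℝ × ℝ => |q.1 - q.2| ^ p :=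
    (continuous_abs.comp (continuous_fst.sub continuous_snd)).rpow_const fun _ => Or.inr hp
  rw [quantileCoupling, integral_map aemeasurable_quantileFun_prod hcont.aestronglyMeasurable,
    intervalIntegral.integral_of_le zero_le_one, integral_Ioc_eq_integral_Ioo]

variable {p : ℝ} (hp : 1 ≤ p) (hνp : Integrable (fun x => |x| ^ p) ν)
  {γ : Measure (ℝ × ℝ)} (h1 : HasLaw Prod.fst μ γ)
  (h2 : HasLaw Prod.snd ν γ)
include hp hνp h1 h2

lemma integral_costKernel_le_quantileCoupling (s : ℝ) :
    ∫ q, costKernel p q s ∂γ ≤ ∫ q, costKernel p q s ∂(quantileCoupling μ ν) := by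
  have := h1.isProbabilityMeasure
  set b := fun y => absRpowDeriv p s - absRpowDeriv p (s - y)
  have hb : Monotone b := fun _ _ h => sub_le_sub_left (monotone_absRpowDeriv hp (by linarith)) _
  have hbν : Integrable b ν := (integrable_const _).sub (integrable_absRpowDeriv_comp hp
    ((memLp_const s).sub (HasLaw.id.memLp_of_integrable_abs_rpow (by linarith) hνp)))
  have hγ : ∫ q, b q.2 ∂γ = ∫ y, b y ∂ν := h2.integral_comp hbν.aestronglyMeasurable
  have hγ' : ∫ q, b q.2 ∂(quantileCoupling μ ν) = ∫ y, b y ∂ν :=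
    hasLaw_snd_quantileCoupling.integral_comp hbν.aestronglyMeasurable
  have hA : 1 - γ.real {q | s < q.1} = cdf μ s := by
    rw [h1.measureReal_eq (p := (s < ·)) measurableSet_Ioi, show {x | s < x} = Ioi s from rfl,
      measureReal_Ioi_eq_one_sub_cdf, sub_sub_cancel]
  have hle := setIntegral_comp_le_integral_quantileFun h2 hb hbν
    (measurableSet_lt (measurable_const (a := s)) measurable_fst)
  rw [hA] at hle
  rw [integral_costKernel_eq_setIntegral hp (h2.memLp_of_integrable_abs_rpow (by linarith) hνp),
    integral_costKernel_eq_setIntegral hp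
      (hasLaw_snd_quantileCoupling.memLp_of_integrable_abs_rpow (by linarith) hνp),
    hγ, hγ', setIntegral_fst_gt_quantileCoupling s hb.measurable]
  exact sub_le_sub_right hle _

theorem integral_abs_sub_rpow_quantileCoupling_le (hμp : Integrable (fun x => |x| ^ p) μ) :
    ∫ q, |q.1 - q.2| ^ p ∂(quantileCoupling μ ν) ≤ ∫ q, |q.1 - q.2| ^ p ∂γ := by
  have := h1.isProbabilityMeasure
  have hp0 : 0 < p := by linarith
  have hx := h1.memLp_of_integrable_abs_rpow hp0 hμp
  have hy := h2.memLp_of_integrable_abs_rpow hp0 hνp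
  have hx' := (hasLaw_fst_quantileCoupling (ν := ν)).memLp_of_integrable_abs_rpow hp0 hμp
  have hy' := (hasLaw_snd_quantileCoupling (μ := μ)).memLp_of_integrable_abs_rpow hp0 hνp
  have hm : Continuous fun x : ℝ => |x| ^ p := continuous_abs.rpow_const fun _ => Or.inr hp0.le
  have e1 : ∫ q, |q.1| ^ p ∂(quantileCoupling μ ν) = ∫ q, |q.1| ^ p ∂γ :=
    (hasLaw_fst_quantileCoupling.integral_comp hm.aestronglyMeasurable).trans
      (h1.integral_comp hm.aestronglyMeasurable).symm
  have e2 : ∫ q, |q.2| ^ p ∂(quantileCoupling μ ν) = ∫ q, |q.2| ^ p ∂γ :=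
    (hasLaw_snd_quantileCoupling.integral_comp hm.aestronglyMeasurable).trans
      (h2.integral_comp hm.aestronglyMeasurable).symm
  rw [integral_abs_sub_rpow_eq hp hx hy, integral_abs_sub_rpow_eq hp hx' hy', e1, e2]
  refine sub_le_sub_left (integral_mono ?_ ?_ fun s => ?_) _
  · exact (integrable_uncurry_costKernel hp hx hy).integral_prod_right
  · exact (integrable_uncurry_costKernel hp hx' hy').integral_prod_right
  · exact integral_costKernel_le_quantileCoupling hp hνp h1 h2 s

end QuantileCoupling

/-- one-dimensional explicit representation of the p-Wasserstein distance:
W_p(μ,ν)^p, defined as the infimum over couplings of ∫|x−y|^p dγ, equals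
∫₀¹ |F_μ⁻¹(u) − F_ν⁻¹(u)|^p du. -/
theorem wasserstein_quantile_representation
    (p : ℝ) (hp : 1 ≤ p)
    (μ ν : Measure ℝ) [IsProbabilityMeasure μ] [IsProbabilityMeasure ν]
    (hμp : Integrable (fun x => |x| ^ p) μ) (hνp : Integrable (fun x => |x| ^ p) ν) :
    sInf {c : ℝ | ∃ γ : Measure (ℝ × ℝ),
        IsProbabilityMeasure γ ∧ γ.map Prod.fst = μ ∧ γ.map Prod.snd = ν ∧
        c = ∫ q, |q.1 - q.2| ^ p ∂γ}
      = ∫ u in (0 : ℝ)..1, |quantileFun μ u - quantileFun ν u| ^ p := by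
  rw [← integral_abs_sub_rpow_quantileCoupling (by linarith)]
  refine IsLeast.csInf_eq ⟨⟨quantileCoupling μ ν, inferInstance,
    hasLaw_fst_quantileCoupling.map_eq, hasLaw_snd_quantileCoupling.map_eq, rfl⟩, ?_⟩
  rintro c ⟨γ, -, h1, h2, rfl⟩
  exact integral_abs_sub_rpow_quantileCoupling_le hp hνp
    ⟨measurable_fst.aemeasurable, h1⟩ ⟨measurable_snd.aemeasurable, h2⟩ hμp
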